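/- arXiv:1710.06418 — 3 statements merged into one kernel-verified Lean document; each statement's English description precedes it below -/
import Mathlib

section
/- Let V be a real vector space equipped with two inner products ⟨·,·⟩ (norm ‖·‖) and ⟨·,·⟩_V (norm ‖·‖_V). Let Δt > 0, θ > 0, 0 ≤ b < θ and F ≥ 0. Let A : V × V → ℝ be a bilinear form with A(v,v) ≥ θ‖v‖_V² for all v ∈ V, let B : V × V → ℝ be a bilinear form with |B(w,v)| ≤ b‖w‖_V‖v‖_V for all w, v ∈ V, and let f ∈ V satisfy |⟨f,v⟩| ≤ F‖v‖_V for all v ∈ V. Suppose u, u⁺ ∈ V satisfy the one-step scheme (1/Δt)⟨u⁺ − u, v⟩ + A(u⁺, v) + B(u, v) = ⟨f, v⟩ for all v ∈ V. Then (1/2)(‖u⁺‖² − ‖u‖²) + (Δt(θ − b)/2)‖u⁺‖_V² + (Δt·b/2)(‖u⁺‖_V² − ‖u‖_V²) ≤ Δt·F²/(2(θ − b)). -/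
open scoped RealInnerProductSpace

/-! Test the scheme with `v = u⁺`. The time-difference term dominates half the jump of `‖·‖²`
by polarization, `A` contributes `θ‖u⁺‖_V²`, the fluctuation `B(u, u⁺)` is split by
`2xy ≤ x² + y²` into halves at the old and new steps, and the forcing is absorbed by Young's
inequality with weight `θ - b`. -/

lemma half_sub_sq_le_inner_sub_self {E : Type*} [NormedAddCommGroup E] [InnerProductSpace ℝ E]
    (x y : E) : (‖x‖ ^ 2 - ‖y‖ ^ 2) / 2 ≤ ⟪x - y, x⟫ := by
  have h := norm_sub_sq_real x y
  rw [inner_sub_left, real_inner_self_eq_norm_sq, real_inner_comm]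
  linarith [sq_nonneg ‖x - y‖]

lemma mul_le_sq_div_add_mul_sq {c : ℝ} (hc : 0 < c) (a x : ℝ) :
    a * x ≤ a ^ 2 / (2 * c) + c / 2 * x ^ 2 := by
  have hsq_nonneg : 0 ≤ (a - c * x) ^ 2 / (2 * c) := by positivity
  have hsq_expand : (a - c * x) ^ 2 / (2 * c) = a ^ 2 / (2 * c) + c / 2 * x ^ 2 - a * x := by
    field_simp
    ring
  linarith

theorem stmt0_general
    {V : Type*} [NormedAddCommGroup V] [InnerProductSpace ℝ V]
    (nV : V → ℝ)
    (Δt θ b F : ℝ)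
    (hΔt : 0 < Δt) (hb : 0 ≤ b) (hbθ : b < θ)
    (A B : V →ₗ[ℝ] V →ₗ[ℝ] ℝ)
    (hA : ∀ v : V, θ * nV v ^ 2 ≤ A v v)
    (hB : ∀ w v : V, |(B w v)| ≤ b * nV w * nV v)
    (f u uplus : V)
    (hf : ∀ v : V, |(⟪f, v⟫)| ≤ F * nV v)
    (hscheme : ∀ v : V,
      (1 / Δt) * ⟪uplus - u, v⟫ + A uplus v + B u v = ⟪f, v⟫) :
    (1 / 2) * (‖uplus‖ ^ 2 - ‖u‖ ^ 2)
      + (Δt * (θ - b) / 2) * nV uplus ^ 2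
      + (Δt * b / 2) * (nV uplus ^ 2 - nV u ^ 2)
      ≤ Δt * F ^ 2 / (2 * (θ - b)) := by
  have hc : 0 < θ - b := sub_pos.mpr hbθ
  have energy : ⟪uplus - u, uplus⟫ + Δt * (A uplus uplus + B u uplus) = Δt * ⟪f, uplus⟫ := by
    have h := hscheme uplus
    field_simp at h
    linarith
  have time_diff := half_sub_sq_le_inner_sub_self uplus u
  have diffusion : θ * nV uplus ^ 2 - b / 2 * (nV u ^ 2 + nV uplus ^ 2)
      ≤ A uplus uplus + B u uplus := by
    nlinarith [hA uplus, neg_abs_le (B u uplus), hB u uplus, two_mul_le_add_sq (nV u) (nV uplus)]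
  have forcing : ⟪f, uplus⟫ ≤ F ^ 2 / (2 * (θ - b)) + (θ - b) / 2 * nV uplus ^ 2 :=
    (le_abs_self _).trans ((hf uplus).trans (mul_le_sq_div_add_mul_sq hc F (nV uplus)))
  linear_combination energy + time_diff + mul_le_mul_of_nonneg_left diffusion hΔt.le
    + mul_le_mul_of_nonneg_left forcing hΔt.le

/-- Per-step energy estimate for the one-step ensemble scheme
(core of the stability proof, Theorem 3.1). -/
theorem stmt0
    {V : Type*} [NormedAddCommGroup V] [InnerProductSpace ℝ V]
    -- second inner product ⟨·,·⟩_V on V with induced norm nV = ‖·‖_V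
    (ipV : V → V → ℝ)
    (hipV_symm : ∀ u v : V, ipV u v = ipV v u)
    (hipV_add : ∀ u v w : V, ipV (u + v) w = ipV u w + ipV v w)
    (hipV_smul : ∀ (c : ℝ) (u v : V), ipV (c • u) v = c * ipV u v)
    (hipV_posdef : ∀ u : V, u ≠ 0 → 0 < ipV u u)
    (nV : V → ℝ) (hnV : ∀ v : V, nV v = Real.sqrt (ipV v v))
    (Δt θ b F : ℝ)
    (hΔt : 0 < Δt) (hθ : 0 < θ) (hb : 0 ≤ b) (hbθ : b < θ) (hF : 0 ≤ F)
    (A B : V →ₗ[ℝ] V →ₗ[ℝ] ℝ)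
    (hA : ∀ v : V, θ * nV v ^ 2 ≤ A v v)
    (hB : ∀ w v : V, |(B w v)| ≤ b * nV w * nV v)
    (f u uplus : V)
    (hf : ∀ v : V, |(⟪f, v⟫)| ≤ F * nV v)
    (hscheme : ∀ v : V,
      (1 / Δt) * ⟪uplus - u, v⟫ + A uplus v + B u v = ⟪f, v⟫) :
    (1 / 2) * (‖uplus‖ ^ 2 - ‖u‖ ^ 2)
      + (Δt * (θ - b) / 2) * nV uplus ^ 2
      + (Δt * b / 2) * (nV uplus ^ 2 - nV u ^ 2)
      ≤ Δt * F ^ 2 / (2 * (θ - b)) :=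
  stmt0_general nV Δt θ b F hΔt hb hbθ A B hA hB f u uplus hf hscheme
end

section
/- Let V be a real vector space equipped with two inner products ⟨·,·⟩ (norm ‖·‖) and ⟨·,·⟩_V (norm ‖·‖_V). Let Δt > 0, θ > 0, b > 0, M ≥ 0, R ≥ 0 and ε > 0. Let A : V × V → ℝ be a bilinear form with A(v,v) ≥ θ‖v‖_V² and |A(w,v)| ≤ M‖w‖_V‖v‖_V for all w, v ∈ V, and let B : V × V → ℝ be a bilinear form with |B(w,v)| ≤ b‖w‖_V‖v‖_V for all w, v ∈ V. Let φ, φ⁺, ρ, ρ⁺, δ ∈ V and let r : V → ℝ be a linear functional with |r(v)| ≤ R‖v‖_V for all v. Suppose (1/Δt)⟨φ⁺ − φ, φ⁺⟩ + A(φ⁺, φ⁺) + B(φ, φ⁺) = A(ρ⁺, φ⁺) + B(ρ, φ⁺) + B(δ, φ⁺) + r(φ⁺). Then (1/(2Δt))(‖φ⁺‖² − ‖φ‖²) + (b/2)(‖φ⁺‖_V² − ‖φ‖_V²) + (θ − (1 + ε)b)‖φ⁺‖_V² ≤ (M²/(ε b))‖ρ⁺‖_V² + (b/ε)‖ρ‖_V²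 + (b/ε)‖δ‖_V² + R²/(ε b). -/
open scoped RealInnerProductSpace

lemma mul_mul_le_young (a x y : ℝ) {c : ℝ} (hc : 0 < c) :
    a * x * y ≤ c / 4 * y ^ 2 + a ^ 2 / c * x ^ 2 := by
  have hsq : c / 4 * y ^ 2 + a ^ 2 / c * x ^ 2 - a * x * y
      = (c * y - 2 * a * x) ^ 2 / (4 * c) := by
    field_simp
    ring
  have : 0 ≤ (c * y - 2 * a * x) ^ 2 / (4 * c) := by positivity
  linarith

lemma le_young_of_abs_le {t a x y c : ℝ} (h : |t| ≤ a * x * y) (hc : 0 < c) :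
    t ≤ c / 4 * y ^ 2 + a ^ 2 / c * x ^ 2 :=
  (le_abs_self t).trans (h.trans (mul_mul_le_young a x y hc))

lemma sq_norm_sub_sq_norm_le_two_inner {E : Type*} [NormedAddCommGroup E]
    [InnerProductSpace ℝ E] (u v : E) :
    ‖u‖ ^ 2 - ‖v‖ ^ 2 ≤ 2 * ⟪u - v, u⟫ := by
  have h := norm_sub_sq_real u v
  rw [inner_sub_left, real_inner_self_eq_norm_sq, real_inner_comm]
  nlinarith [sq_nonneg ‖u - v‖]

theorem stmt6_general
    {V : Type*} [NormedAddCommGroup V] [InnerProductSpace ℝ V]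
    (nV : V → ℝ)
    (Δt θ b M R ε : ℝ)
    (hΔt : 0 < Δt) (hb : 0 < b) (hε : 0 < ε)
    (A B : V →ₗ[ℝ] V →ₗ[ℝ] ℝ)
    (hA_coer : ∀ v : V, θ * nV v ^ 2 ≤ A v v)
    (hA_bdd : ∀ w v : V, |(A w v)| ≤ M * nV w * nV v)
    (hB : ∀ w v : V, |(B w v)| ≤ b * nV w * nV v)
    (φ φp ρ ρp δ : V) (r : V →ₗ[ℝ] ℝ)
    (hr : ∀ v : V, |(r v)| ≤ R * nV v)
    (hscheme : (1 / Δt) * ⟪φp - φ, φp⟫ + A φp φp + B φ φp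
      = A ρp φp + B ρ φp + B δ φp + r φp) :
    (1 / (2 * Δt)) * (‖φp‖ ^ 2 - ‖φ‖ ^ 2) + (b / 2) * (nV φp ^ 2 - nV φ ^ 2)
        + (θ - (1 + ε) * b) * nV φp ^ 2
      ≤ (M ^ 2 / (ε * b)) * nV ρp ^ 2 + (b / ε) * nV ρ ^ 2 + (b / ε) * nV δ ^ 2
        + R ^ 2 / (ε * b) := by
  have hεb : 0 < ε * b := mul_pos hε hb
  have htime : (1 / (2 * Δt)) * (‖φp‖ ^ 2 - ‖φ‖ ^ 2) ≤ (1 / Δt) * ⟪φp - φ, φp⟫ := by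
    calc (1 / (2 * Δt)) * (‖φp‖ ^ 2 - ‖φ‖ ^ 2)
        ≤ (1 / (2 * Δt)) * (2 * ⟪φp - φ, φp⟫) := by
          gcongr
          exact sq_norm_sub_sq_norm_le_two_inner φp φ
      _ = (1 / Δt) * ⟪φp - φ, φp⟫ := by field_simp
  -- Young with weight `2b` on the explicit fluctuation term, with weight `εb` on the four others.
  have hBφ := le_young_of_abs_le (t := -B φ φp) ((abs_neg _).trans_le (hB φ φp))
    (by positivity : 0 < 2 * b)
  have hAρp := le_young_of_abs_le (hA_bdd ρp φp) hεb
  have hBρ := le_young_of_abs_le (hB ρ φp) hεb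
  have hBδ := le_young_of_abs_le (hB δ φp) hεb
  have hrφp := le_young_of_abs_le (x := 1) (by simpa using hr φp) hεb
  have hb₁ : b ^ 2 / (2 * b) = b / 2 := by field_simp
  have hb₂ : b ^ 2 / (ε * b) = b / ε := by field_simp
  rw [hb₁] at hBφ
  rw [hb₂] at hBρ hBδ
  linarith [hA_coer φp]

/-- Per-step error inequality (equation (error5)) in the error analysis of the
ensemble scheme (Theorem 3.2), with Young-parameter ε. -/
theorem stmt6
    {V : Type*} [NormedAddCommGroup V] [InnerProductSpace ℝ V]
    -- second inner product ⟨·,·⟩_V on V with induced norm nV = ‖·‖_V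
    (ipV : V → V → ℝ)
    (hipV_symm : ∀ u v : V, ipV u v = ipV v u)
    (hipV_add : ∀ u v w : V, ipV (u + v) w = ipV u w + ipV v w)
    (hipV_smul : ∀ (c : ℝ) (u v : V), ipV (c • u) v = c * ipV u v)
    (hipV_posdef : ∀ u : V, u ≠ 0 → 0 < ipV u u)
    (nV : V → ℝ) (hnV : ∀ v : V, nV v = Real.sqrt (ipV v v))
    (Δt θ b M R ε : ℝ)
    (hΔt : 0 < Δt) (hθ : 0 < θ) (hb : 0 < b) (hM : 0 ≤ M) (hR : 0 ≤ R) (hε : 0 < ε)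
    (A B : V →ₗ[ℝ] V →ₗ[ℝ] ℝ)
    (hA_coer : ∀ v : V, θ * nV v ^ 2 ≤ A v v)
    (hA_bdd : ∀ w v : V, |(A w v)| ≤ M * nV w * nV v)
    (hB : ∀ w v : V, |(B w v)| ≤ b * nV w * nV v)
    (φ φp ρ ρp δ : V) (r : V →ₗ[ℝ] ℝ)
    (hr : ∀ v : V, |(r v)| ≤ R * nV v)
    (hscheme : (1 / Δt) * ⟪φp - φ, φp⟫ + A φp φp + B φ φp
      = A ρp φp + B ρ φp + B δ φp + r φp) :
    (1 / (2 * Δt)) * (‖φp‖ ^ 2 - ‖φ‖ ^ 2) + (b / 2) * (nV φp ^ 2 - nV φ ^ 2)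
        + (θ - (1 + ε) * b) * nV φp ^ 2
      ≤ (M ^ 2 / (ε * b)) * nV ρp ^ 2 + (b / ε) * nV ρ ^ 2 + (b / ε) * nV δ ^ 2
        + R ^ 2 / (ε * b) :=
  stmt6_general nV Δt θ b M R ε hΔt hb hε A B hA_coer hA_bdd hB φ φp ρ ρp δ r hr hscheme
end

section
/- Let V be a real vector space equipped with two inner products ⟨·,·⟩ (norm ‖·‖) and ⟨·,·⟩_V (norm ‖·‖_V), and suppose the Poincaré-type inequality ‖v‖ ≤ C_P ‖v‖_V holds for all v ∈ V with a constant C_P > 0. Let V_h ⊆ V be a subspace and P : V → V_h a linear map with ⟨v − P v, w⟩ = 0 for all v ∈ V and w ∈ V_h. Let N ≥ 1, Δt > 0, and 0 < θ₊ < θ, M ≥ 0. For each n ∈ {1, …, N} let A_n, B_n : V × V → ℝ be bilinear forms with A_n(v,v) ≥ θ‖v‖_V², |A_n(w,v)| ≤ M‖w‖_V‖v‖_V and |B_n(w,v)| ≤ θ₊‖w‖_V‖v‖_V for all w, v ∈ V, and let ℓ_n, r_n : V → ℝ be linear functionals with |r_n(v)| ≤ R_n‖v‖_V for all v, where R_n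 ≥ 0. Suppose u⁰, …, u^N ∈ V satisfy the consistency relations (1/Δt)⟨u^{n+1} − u^n, v⟩ + A_{n+1}(u^{n+1}, v) + B_{n+1}(u^{n+1}, v) = ℓ_{n+1}(v) − r_{n+1}(v) for all v ∈ V_h and 0 ≤ n ≤ N−1, and suppose u_h⁰, …, u_h^N ∈ V_h satisfy u_h⁰ = P u⁰ and the scheme (1/Δt)⟨u_h^{n+1} − u_h^n, v⟩ + A_{n+1}(u_h^{n+1}, v) + B_{n+1}(u_h^n, v) = ℓ_{n+1}(v) for all v ∈ V_h and 0 ≤ n ≤ N−1. Assume the approximation bounds ‖u^n − P u^n‖_V ≤ η_n for 0 ≤ n ≤ N and the increment bounds ‖u^{n+1} − u^n‖_V ≤ D_{n+1} for 0 ≤ n ≤ N−1. Then there exists a constant C > 0, depending only on θ, θ₊, M and C_P, such that, writing e^n = u^n − u_h^n, one has ‖e^N‖² + θ₊ Δt ‖e^N‖_V² + (θ − θ₊) Δt ∑_{n=1}^{N} ‖e^n‖_V² ≤ C ( (1 + Δt) η_N² + Δt ∑_{n=0}^{N} η_n² + Δt ∑_{n=1}^{N} (D_n² + R_n²) ). 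-/
open scoped RealInnerProductSpace
open Finset

/-!
Split the error as `u - uh = (u - P u) + φ` with `φ = P u - uh ∈ Vh`. Subtracting the scheme from
the consistency relation and testing with `φⁿ⁺¹`, the orthogonality of `P` removes the discrete time
derivative of `u - P u`, and `2 ⟪φⁿ⁺¹ - φⁿ, φⁿ⁺¹⟫ ≥ ‖φⁿ⁺¹‖² - ‖φⁿ‖²`. Coercivity of `A` absorbs
the data terms by Young's inequality, while the explicit term `B(φⁿ, φⁿ⁺¹)` is split as
`θ₊/2 (‖φⁿ‖_V² + ‖φⁿ⁺¹‖_V²)`: because `θ₊ < θ`, the energy `‖φⁿ‖² + θ₊ Δt ‖φⁿ‖_V²` then decreases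
up to data terms while `(θ - θ₊) Δt ‖φⁿ⁺¹‖_V²` is left over. Summing these one-step inequalities
telescopes, and `u - P u` is added back with the Poincaré inequality.
-/

structure IsInnerForm {V : Type*} [AddCommGroup V] [Module ℝ V] (b : V → V → ℝ) : Prop where
  symm : ∀ u v, b u v = b v u
  add_left : ∀ u v w, b (u + v) w = b u w + b v w
  smul_left : ∀ (c : ℝ) u v, b (c • u) v = c * b u v
  pos : ∀ u, u ≠ 0 → 0 < b u u

namespace IsInnerForm

variable {V : Type*} [AddCommGroup V] [Module ℝ V] {b : V → V → ℝ} (hb : IsInnerForm b)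
include hb

lemma zero_left (v : V) : b 0 v = 0 := by
  simpa using hb.smul_left 0 0 v

lemma self_nonneg (v : V) : 0 ≤ b v v := by
  rcases eq_or_ne v 0 with rfl | hv
  · exact (hb.zero_left 0).ge
  · exact (hb.pos v hv).le

lemma sub_left (u v w : V) : b (u - v) w = b u w - b v w := by
  have := hb.add_left (u - v) v w
  rw [sub_add_cancel] at this
  linarith

lemma parallelogram_law (u v : V) :
    b (u + v) (u + v) + b (u - v) (u - v) = 2 * b u u + 2 * b v v := by
  simp only [hb.add_left, hb.sub_left, hb.symm u (u + v), hb.symm v (u + v),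
    hb.symm u (u - v), hb.symm v (u - v), hb.symm v u]
  ring

lemma sqrt_add_sq_le {n : V → ℝ} (hn : ∀ v, n v = √(b v v)) (u v : V) :
    n (u + v) ^ 2 ≤ 2 * (n u ^ 2 + n v ^ 2) := by
  simp only [hn, Real.sq_sqrt (hb.self_nonneg _)]
  linarith [hb.parallelogram_law u v, hb.self_nonneg (u - v)]

end IsInnerForm

lemma sum_Icc_one_eq_sum_range {M : Type*} [AddCommMonoid M] (f : ℕ → M) (n : ℕ) :
    ∑ i ∈ Icc 1 n, f i = ∑ i ∈ range n, f (i + 1) := by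
  rw [← Ico_add_one_right_eq_Icc, sum_Ico_eq_sum_range]
  simp [add_comm]

lemma add_sum_range_le_of_succ_le {E F G : ℕ → ℝ} {N : ℕ}
    (h : ∀ n < N, E (n + 1) + F n ≤ E n + G n) :
    E N + ∑ n ∈ range N, F n ≤ E 0 + ∑ n ∈ range N, G n := by
  have := sum_le_sum fun n hn => h n (mem_range.1 hn)
  rw [sum_add_distrib, sum_add_distrib] at this
  linarith [sum_range_succ E N, sum_range_succ' E N]

lemma add_four_sq_le (a b c d : ℝ) :
    (a + b + c + d) ^ 2 ≤ 4 * (a ^ 2 + b ^ 2 + c ^ 2 + d ^ 2) := by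
  nlinarith [sq_nonneg (a - b), sq_nonneg (a - c), sq_nonneg (a - d), sq_nonneg (b - c),
    sq_nonneg (b - d), sq_nonneg (c - d)]

lemma mul_sq_le_mul_sq (c : ℝ) {x y : ℝ} (hx : 0 ≤ x) (hxy : x ≤ y) :
    (c * x) ^ 2 ≤ c ^ 2 * y ^ 2 := by
  rw [mul_pow]; gcongr

lemma sum_range_data_sq_le (M θp : ℝ) (η D R : ℕ → ℝ) (N : ℕ) :
    ∑ n ∈ range N,
        (M ^ 2 * η (n + 1) ^ 2 + θp ^ 2 * D (n + 1) ^ 2 + θp ^ 2 * η n ^ 2 + R (n + 1) ^ 2)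
      ≤ (M ^ 2 + θp ^ 2 + 1)
        * (∑ n ∈ range (N + 1), η n ^ 2 + ∑ n ∈ Icc 1 N, (D n ^ 2 + R n ^ 2)) := by
  have hη₁ : ∑ n ∈ range N, η (n + 1) ^ 2 ≤ ∑ n ∈ range (N + 1), η n ^ 2 := by
    rw [sum_range_succ']; linarith [sq_nonneg (η 0)]
  have hη₀ : ∑ n ∈ range N, η n ^ 2 ≤ ∑ n ∈ range (N + 1), η n ^ 2 := by
    rw [sum_range_succ]; linarith [sq_nonneg (η N)]
  have hD : 0 ≤ ∑ n ∈ range N, D (n + 1) ^ 2 := sum_nonneg fun _ _ => sq_nonneg _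
  have hR : 0 ≤ ∑ n ∈ range N, R (n + 1) ^ 2 := sum_nonneg fun _ _ => sq_nonneg _
  have hη : 0 ≤ ∑ n ∈ range (N + 1), η n ^ 2 := sum_nonneg fun _ _ => sq_nonneg _
  simp only [sum_Icc_one_eq_sum_range, sum_add_distrib, ← mul_sum]
  nlinarith [mul_le_mul_of_nonneg_left hη₁ (sq_nonneg M),
    mul_le_mul_of_nonneg_left hη₀ (sq_nonneg θp),
    mul_nonneg (sq_nonneg M) hD, mul_nonneg (sq_nonneg M) hR, mul_nonneg (sq_nonneg θp) hR,
    mul_nonneg (sq_nonneg M) hη, mul_nonneg (sq_nonneg θp) hη]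

lemma norm_add_sq_le_two_mul {E : Type*} [SeminormedAddCommGroup E] (x y : E) :
    ‖x + y‖ ^ 2 ≤ 2 * (‖x‖ ^ 2 + ‖y‖ ^ 2) :=
  (pow_le_pow_left₀ (norm_nonneg _) (norm_add_le x y) 2).trans add_sq_le

section
variable {V : Type*} [NormedAddCommGroup V] [InnerProductSpace ℝ V]

lemma norm_sq_sub_norm_sq_le_two_inner (x y : V) : ‖x‖ ^ 2 - ‖y‖ ^ 2 ≤ 2 * ⟪x - y, x⟫ := by
  have := norm_sub_sq_real x y
  rw [inner_sub_left, real_inner_self_eq_norm_sq, real_inner_comm]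
  nlinarith [sq_nonneg ‖x - y‖]

lemma energy_step (x y : V) {Δt θ θp q F K p p' : ℝ} (hΔt : 0 ≤ Δt) (hθp : 0 ≤ θp) (hθ : θp < θ)
    (heq : ⟪x - y, x⟫ = -Δt * (q + F)) (hq : θ * p ^ 2 ≤ q) (hF : -F ≤ K * p + θp * p' * p) :
    ‖x‖ ^ 2 + θp * Δt * p ^ 2 + (θ - θp) * Δt * p ^ 2
      ≤ ‖y‖ ^ 2 + θp * Δt * p' ^ 2 + Δt * K ^ 2 / (θ - θp) := by
  have hc : 0 < θ - θp := sub_pos.2 hθ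
  have young : 2 * K * p ≤ K ^ 2 / (θ - θp) + (θ - θp) * p ^ 2 := by
    rw [div_add' _ _ _ hc.ne', le_div_iff₀ hc]
    nlinarith [sq_nonneg (K - (θ - θp) * p)]
  have young' : 2 * θp * p' * p ≤ θp * p ^ 2 + θp * p' ^ 2 := by
    nlinarith [mul_nonneg hθp (sq_nonneg (p - p'))]
  have key : -(q + F) ≤ (K ^ 2 / (θ - θp) + θp * p' ^ 2 - θp * p ^ 2 - (θ - θp) * p ^ 2) / 2 := by
    linarith
  have := norm_sq_sub_norm_sq_le_two_inner x y
  rw [heq] at this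
  rw [mul_div_assoc]
  nlinarith [mul_le_mul_of_nonneg_left key hΔt]

lemma inner_projected_error_sub_eq {P : V →ₗ[ℝ] V} {v : V} (hP : ∀ w, ⟪w - P w, v⟫ = 0)
    {Δt : ℝ} (hΔt : Δt ≠ 0) {a b : V →ₗ[ℝ] V →ₗ[ℝ] ℝ} {l r : V →ₗ[ℝ] ℝ} {u₀ u₁ uh₀ uh₁ : V}
    (hu : (1 / Δt) * ⟪u₁ - u₀, v⟫ + a u₁ v + b u₁ v = l v - r v)
    (huh : (1 / Δt) * ⟪uh₁ - uh₀, v⟫ + a uh₁ v + b uh₀ v = l v) :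
    ⟪(P u₁ - uh₁) - (P u₀ - uh₀), v⟫
      = -Δt * (a (P u₁ - uh₁) v + (a (u₁ - P u₁) v + b (u₁ - u₀) v + b (u₀ - P u₀) v
        + b (P u₀ - uh₀) v + r v)) := by
  have h₀ := hP u₀
  have h₁ := hP u₁
  simp only [map_sub, LinearMap.sub_apply, inner_sub_left] at *
  field_simp at hu huh
  linear_combination hu - huh - h₁ + h₀

lemma projected_error_energy_step {P : V →ₗ[ℝ] V} {u₀ u₁ uh₀ uh₁ : V}
    (hP : ∀ w, ⟪w - P w, P u₁ - uh₁⟫ = 0) {Δt θ θp M Rn : ℝ} (hΔt : 0 < Δt) (hθp : 0 ≤ θp)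
    (hθ : θp < θ) {a b : V →ₗ[ℝ] V →ₗ[ℝ] ℝ} {l r : V →ₗ[ℝ] ℝ} {nV : V → ℝ}
    (hcoer : θ * nV (P u₁ - uh₁) ^ 2 ≤ a (P u₁ - uh₁) (P u₁ - uh₁))
    (ha : ∀ w v, |a w v| ≤ M * nV w * nV v) (hb : ∀ w v, |b w v| ≤ θp * nV w * nV v)
    (hr : ∀ v, |r v| ≤ Rn * nV v)
    (hu : (1 / Δt) * ⟪u₁ - u₀, P u₁ - uh₁⟫ + a u₁ (P u₁ - uh₁) + b u₁ (P u₁ - uh₁)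
      = l (P u₁ - uh₁) - r (P u₁ - uh₁))
    (huh : (1 / Δt) * ⟪uh₁ - uh₀, P u₁ - uh₁⟫ + a uh₁ (P u₁ - uh₁) + b uh₀ (P u₁ - uh₁)
      = l (P u₁ - uh₁)) :
    ‖P u₁ - uh₁‖ ^ 2 + θp * Δt * nV (P u₁ - uh₁) ^ 2 + (θ - θp) * Δt * nV (P u₁ - uh₁) ^ 2
      ≤ ‖P u₀ - uh₀‖ ^ 2 + θp * Δt * nV (P u₀ - uh₀) ^ 2
        + Δt * (M * nV (u₁ - P u₁) + θp * nV (u₁ - u₀) + θp * nV (u₀ - P u₀) + Rn) ^ 2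
          / (θ - θp) := by
  refine energy_step _ _ hΔt.le hθp hθ
    (inner_projected_error_sub_eq hP hΔt.ne' hu huh) hcoer ?_
  linarith [neg_abs_le (a (u₁ - P u₁) (P u₁ - uh₁)), neg_abs_le (b (u₁ - u₀) (P u₁ - uh₁)),
    neg_abs_le (b (u₀ - P u₀) (P u₁ - uh₁)), neg_abs_le (b (P u₀ - uh₀) (P u₁ - uh₁)),
    neg_abs_le (r (P u₁ - uh₁)), ha (u₁ - P u₁) (P u₁ - uh₁), hb (u₁ - u₀) (P u₁ - uh₁),
    hb (u₀ - P u₀) (P u₁ - uh₁), hb (P u₀ - uh₀) (P u₁ - uh₁), hr (P u₁ - uh₁)]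

lemma projected_error_energy_le {Vh : Submodule ℝ V} {P : V →ₗ[ℝ] V} (hP : ∀ v, P v ∈ Vh)
    (horth : ∀ v, ∀ w ∈ Vh, ⟪v - P v, w⟫ = 0) {N : ℕ} {Δt θ θp M : ℝ} (hΔt : 0 < Δt)
    (hθp : 0 ≤ θp) (hθ : θp < θ) {A B : ℕ → V →ₗ[ℝ] V →ₗ[ℝ] ℝ} {l r : ℕ → V →ₗ[ℝ] ℝ}
    {R : ℕ → ℝ} {nV : V → ℝ} (hnV0 : nV 0 = 0) (hnV : ∀ v, 0 ≤ nV v)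
    (hcoer : ∀ n, 1 ≤ n → n ≤ N → ∀ v, θ * nV v ^ 2 ≤ A n v v)
    (hA : ∀ n, 1 ≤ n → n ≤ N → ∀ w v, |A n w v| ≤ M * nV w * nV v)
    (hB : ∀ n, 1 ≤ n → n ≤ N → ∀ w v, |B n w v| ≤ θp * nV w * nV v)
    (hr : ∀ n, 1 ≤ n → n ≤ N → ∀ v, |r n v| ≤ R n * nV v) {u uh : ℕ → V} {η D : ℕ → ℝ}
    (hu : ∀ n < N, ∀ v ∈ Vh, (1 / Δt) * ⟪u (n + 1) - u n, v⟫ + A (n + 1) (u (n + 1)) v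
      + B (n + 1) (u (n + 1)) v = l (n + 1) v - r (n + 1) v)
    (huhVh : ∀ n ≤ N, uh n ∈ Vh) (huh0 : uh 0 = P (u 0))
    (huh : ∀ n < N, ∀ v ∈ Vh, (1 / Δt) * ⟪uh (n + 1) - uh n, v⟫ + A (n + 1) (uh (n + 1)) v
      + B (n + 1) (uh n) v = l (n + 1) v)
    (hη : ∀ n ≤ N, nV (u n - P (u n)) ≤ η n) (hD : ∀ n < N, nV (u (n + 1) - u n) ≤ D (n + 1)) :
    ‖P (u N) - uh N‖ ^ 2 + θp * Δt * nV (P (u N) - uh N) ^ 2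
        + (θ - θp) * Δt * ∑ n ∈ Icc 1 N, nV (P (u n) - uh n) ^ 2
      ≤ 4 * Δt * (M ^ 2 + θp ^ 2 + 1) / (θ - θp)
        * (∑ n ∈ range (N + 1), η n ^ 2 + ∑ n ∈ Icc 1 N, (D n ^ 2 + R n ^ 2)) := by
  have hc : 0 < θ - θp := sub_pos.2 hθ
  have step : ∀ n < N,
      (‖P (u (n + 1)) - uh (n + 1)‖ ^ 2 + θp * Δt * nV (P (u (n + 1)) - uh (n + 1)) ^ 2)
        + (θ - θp) * Δt * nV (P (u (n + 1)) - uh (n + 1)) ^ 2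
      ≤ (‖P (u n) - uh n‖ ^ 2 + θp * Δt * nV (P (u n) - uh n) ^ 2)
        + 4 * Δt / (θ - θp) * (M ^ 2 * η (n + 1) ^ 2 + θp ^ 2 * D (n + 1) ^ 2
          + θp ^ 2 * η n ^ 2 + R (n + 1) ^ 2) := by
    intro n hn
    have hn₁ : 1 ≤ n + 1 := Nat.le_add_left 1 n
    have hφ : P (u (n + 1)) - uh (n + 1) ∈ Vh := Vh.sub_mem (hP _) (huhVh _ hn)
    have hK : (M * nV (u (n + 1) - P (u (n + 1))) + θp * nV (u (n + 1) - u n)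
          + θp * nV (u n - P (u n)) + R (n + 1)) ^ 2
        ≤ 4 * (M ^ 2 * η (n + 1) ^ 2 + θp ^ 2 * D (n + 1) ^ 2 + θp ^ 2 * η n ^ 2
          + R (n + 1) ^ 2) := by
      refine (add_four_sq_le _ _ _ _).trans ?_
      gcongr
      · exact mul_sq_le_mul_sq _ (hnV _) (hη _ hn)
      · exact mul_sq_le_mul_sq _ (hnV _) (hD _ hn)
      · exact mul_sq_le_mul_sq _ (hnV _) (hη _ hn.le)
    have := projected_error_energy_step (fun w => horth w _ hφ) hΔt hθp hθ
      (hcoer _ hn₁ hn _) (hA _ hn₁ hn) (hB _ hn₁ hn) (hr _ hn₁ hn)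
      (hu n hn _ hφ) (huh n hn _ hφ)
    calc _ ≤ _ := this
      _ ≤ _ := by
        rw [div_mul_eq_mul_div]
        gcongr _ + ?_ / _
        linarith [mul_le_mul_of_nonneg_left hK hΔt.le]
  have hsum := add_sum_range_le_of_succ_le
    (E := fun n => ‖P (u n) - uh n‖ ^ 2 + θp * Δt * nV (P (u n) - uh n) ^ 2) step
  have hdata := mul_le_mul_of_nonneg_left (sum_range_data_sq_le M θp η D R N)
    (div_nonneg (mul_nonneg zero_le_four hΔt.le) hc.le)
  simp only [huh0, sub_self, norm_zero, hnV0, ← mul_sum] at hsum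
  rw [sum_Icc_one_eq_sum_range]
  calc _ ≤ 4 * Δt / (θ - θp) * ((M ^ 2 + θp ^ 2 + 1)
          * (∑ n ∈ range (N + 1), η n ^ 2 + ∑ n ∈ Icc 1 N, (D n ^ 2 + R n ^ 2))) := by linarith
    _ = _ := by ring

lemma error_estimate {Vh : Submodule ℝ V} {P : V →ₗ[ℝ] V} (hP : ∀ v, P v ∈ Vh)
    (horth : ∀ v, ∀ w ∈ Vh, ⟪v - P v, w⟫ = 0) {N : ℕ} {Δt θ θp M CP : ℝ} (hΔt : 0 < Δt)
    (hθp : 0 ≤ θp) (hθ : θp < θ) {A B : ℕ → V →ₗ[ℝ] V →ₗ[ℝ] ℝ} {l r : ℕ → V →ₗ[ℝ] ℝ}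
    {R : ℕ → ℝ} {nV : V → ℝ} (hnV0 : nV 0 = 0) (hnV : ∀ v, 0 ≤ nV v)
    (hnV_add : ∀ v w, nV (v + w) ^ 2 ≤ 2 * (nV v ^ 2 + nV w ^ 2))
    (hpoincare : ∀ v, ‖v‖ ≤ CP * nV v)
    (hcoer : ∀ n, 1 ≤ n → n ≤ N → ∀ v, θ * nV v ^ 2 ≤ A n v v)
    (hA : ∀ n, 1 ≤ n → n ≤ N → ∀ w v, |A n w v| ≤ M * nV w * nV v)
    (hB : ∀ n, 1 ≤ n → n ≤ N → ∀ w v, |B n w v| ≤ θp * nV w * nV v)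
    (hr : ∀ n, 1 ≤ n → n ≤ N → ∀ v, |r n v| ≤ R n * nV v) {u uh : ℕ → V} {η D : ℕ → ℝ}
    (hu : ∀ n < N, ∀ v ∈ Vh, (1 / Δt) * ⟪u (n + 1) - u n, v⟫ + A (n + 1) (u (n + 1)) v
      + B (n + 1) (u (n + 1)) v = l (n + 1) v - r (n + 1) v)
    (huhVh : ∀ n ≤ N, uh n ∈ Vh) (huh0 : uh 0 = P (u 0))
    (huh : ∀ n < N, ∀ v ∈ Vh, (1 / Δt) * ⟪uh (n + 1) - uh n, v⟫ + A (n + 1) (uh (n + 1)) v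
      + B (n + 1) (uh n) v = l (n + 1) v)
    (hη : ∀ n ≤ N, nV (u n - P (u n)) ≤ η n) (hD : ∀ n < N, nV (u (n + 1) - u n) ≤ D (n + 1)) :
    ‖u N - uh N‖ ^ 2 + θp * Δt * nV (u N - uh N) ^ 2
        + (θ - θp) * Δt * ∑ n ∈ Icc 1 N, nV (u n - uh n) ^ 2
      ≤ (2 * (CP ^ 2 + θ) + 8 * (M ^ 2 + θp ^ 2 + 1) / (θ - θp))
        * ((1 + Δt) * η N ^ 2 + Δt * ∑ n ∈ range (N + 1), η n ^ 2
          + Δt * ∑ n ∈ Icc 1 N, (D n ^ 2 + R n ^ 2)) := by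
  have hc : 0 < θ - θp := sub_pos.2 hθ
  have hφ := projected_error_energy_le hP horth hΔt hθp hθ hnV0 hnV hcoer hA hB hr hu huhVh huh0
    huh hη hD
  have hsplit : ∀ n, u n - uh n = (u n - P (u n)) + (P (u n) - uh n) := fun n => by abel
  have hnorm : ‖u N - uh N‖ ^ 2 ≤ 2 * (CP ^ 2 * η N ^ 2 + ‖P (u N) - uh N‖ ^ 2) := by
    rw [hsplit]
    refine (norm_add_sq_le_two_mul _ _).trans ?_
    gcongr
    exact (pow_le_pow_left₀ (norm_nonneg _) (hpoincare _) 2).trans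
      (mul_sq_le_mul_sq _ (hnV _) (hη N le_rfl))
  have hnV_sq : ∀ n ≤ N, nV (u n - uh n) ^ 2 ≤ 2 * (η n ^ 2 + nV (P (u n) - uh n) ^ 2) := by
    intro n hn
    rw [hsplit]
    refine (hnV_add _ _).trans ?_
    gcongr
    exacts [hnV _, hη n hn]
  have hsum : ∑ n ∈ Icc 1 N, nV (u n - uh n) ^ 2
      ≤ 2 * (∑ n ∈ range (N + 1), η n ^ 2 + ∑ n ∈ Icc 1 N, nV (P (u n) - uh n) ^ 2) := by
    calc _ ≤ ∑ n ∈ Icc 1 N, 2 * (η n ^ 2 + nV (P (u n) - uh n) ^ 2) :=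
          sum_le_sum fun n hn => hnV_sq n (mem_Icc.1 hn).2
      _ ≤ _ := by
        rw [← mul_sum, sum_add_distrib]
        gcongr
        intro n hn
        simp only [mem_Icc, mem_range] at hn ⊢
        omega
  have hk : 0 ≤ (M ^ 2 + θp ^ 2 + 1) / (θ - θp) := by positivity
  have hη2 : 0 ≤ η N ^ 2 := sq_nonneg _
  have hSη : 0 ≤ ∑ n ∈ range (N + 1), η n ^ 2 := sum_nonneg fun _ _ => sq_nonneg _
  have hSDR : 0 ≤ ∑ n ∈ Icc 1 N, (D n ^ 2 + R n ^ 2) :=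
    sum_nonneg fun _ _ => add_nonneg (sq_nonneg _) (sq_nonneg _)
  rw [mul_div_assoc] at hφ ⊢
  -- `2 CP²` pays for `‖u - P u‖`, `2 θ = 2 θp + 2 (θ - θp)` for `‖u - P u‖_V`, and the last
  -- summand of the constant is twice the energy bound on `P u - uh`.
  nlinarith [mul_le_mul_of_nonneg_left (hnV_sq N le_rfl) (mul_nonneg hθp hΔt.le),
    mul_le_mul_of_nonneg_left hsum (mul_nonneg hc.le hΔt.le), mul_nonneg hk hη2,
    mul_nonneg (mul_nonneg hk hΔt.le) hη2, mul_nonneg hΔt.le hη2, mul_nonneg hΔt.le hSη,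
    mul_nonneg hΔt.le hSDR, mul_nonneg (sq_nonneg CP) hη2, mul_nonneg hθp hη2,
    mul_nonneg (mul_nonneg (sq_nonneg CP) hΔt.le) hη2]

end

theorem stmt7_general (θ θp M CP : ℝ) (hθp : 0 < θp) (hθpθ : θp < θ) :
    ∃ C : ℝ, 0 < C ∧
      ∀ (V : Type) (_ : NormedAddCommGroup V), ∀ (_ : InnerProductSpace ℝ V),
      -- second inner product ⟨·,·⟩_V on V with induced norm nV = ‖·‖_V
      ∀ (ipV : V → V → ℝ),
      (∀ u v : V, ipV u v = ipV v u) →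
      (∀ u v w : V, ipV (u + v) w = ipV u w + ipV v w) →
      (∀ (c : ℝ) (u v : V), ipV (c • u) v = c * ipV u v) →
      (∀ u : V, u ≠ 0 → 0 < ipV u u) →
      ∀ (nV : V → ℝ), (∀ v : V, nV v = Real.sqrt (ipV v v)) →
      -- Poincaré-type inequality
      (∀ v : V, ‖v‖ ≤ CP * nV v) →
      -- subspace Vh and projection P
      ∀ (Vh : Submodule ℝ V) (P : V →ₗ[ℝ] V),
      (∀ v : V, P v ∈ Vh) →
      (∀ v : V, ∀ w ∈ Vh, ⟪v - P v, w⟫ = (0 : ℝ)) →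
      ∀ (N : ℕ), 1 ≤ N → ∀ (Δt : ℝ), 0 < Δt →
      ∀ (A B : ℕ → V →ₗ[ℝ] V →ₗ[ℝ] ℝ) (l r : ℕ → V →ₗ[ℝ] ℝ) (R : ℕ → ℝ),
      (∀ n, 1 ≤ n → n ≤ N → ∀ v : V, θ * nV v ^ 2 ≤ A n v v) →
      (∀ n, 1 ≤ n → n ≤ N → ∀ w v : V, |(A n w v)| ≤ M * nV w * nV v) →
      (∀ n, 1 ≤ n → n ≤ N → ∀ w v : V, |(B n w v)| ≤ θp * nV w * nV v) →
      (∀ n, 1 ≤ n → n ≤ N → 0 ≤ R n) →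
      (∀ n, 1 ≤ n → n ≤ N → ∀ v : V, |(r n v)| ≤ R n * nV v) →
      ∀ (u uh : ℕ → V) (η D : ℕ → ℝ),
      -- consistency relations for the exact solution, tested against Vh
      (∀ n, n < N → ∀ v ∈ Vh,
        (1 / Δt) * ⟪u (n + 1) - u n, v⟫ + A (n + 1) (u (n + 1)) v
          + B (n + 1) (u (n + 1)) v = l (n + 1) v - r (n + 1) v) →
      -- the discrete scheme
      (∀ n, n ≤ N → uh n ∈ Vh) →
      uh 0 = P (u 0) →
      (∀ n, n < N → ∀ v ∈ Vh,
        (1 / Δt) * ⟪uh (n + 1) - uh n, v⟫ + A (n + 1) (uh (n + 1)) v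
          + B (n + 1) (uh n) v = l (n + 1) v) →
      -- approximation and increment bounds
      (∀ n, n ≤ N → nV (u n - P (u n)) ≤ η n) →
      (∀ n, n < N → nV (u (n + 1) - u n) ≤ D (n + 1)) →
      ‖u N - uh N‖ ^ 2 + θp * Δt * nV (u N - uh N) ^ 2
          + (θ - θp) * Δt * ∑ n ∈ Finset.Icc 1 N, nV (u n - uh n) ^ 2
        ≤ C * ((1 + Δt) * η N ^ 2 + Δt * ∑ n ∈ Finset.range (N + 1), η n ^ 2
            + Δt * ∑ n ∈ Finset.Icc 1 N, (D n ^ 2 + R n ^ 2)) := by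
  have hc : 0 < θ - θp := sub_pos.2 hθpθ
  have hθ : 0 < θ := hθp.trans hθpθ
  refine ⟨2 * (CP ^ 2 + θ) + 8 * (M ^ 2 + θp ^ 2 + 1) / (θ - θp),
    add_pos (by positivity) (div_pos (by positivity) hc), ?_⟩
  intro V _ _ ipV hsymm hadd hsmul hpos nV hnV hpoincare Vh P hP horth N _ Δt hΔt A B l r R
    hcoer hA hB _ hr u uh η D hu huhVh huh0 huh hη hD
  have hb : IsInnerForm ipV := ⟨hsymm, hadd, hsmul, hpos⟩
  have hnV0 : nV 0 = 0 := by rw [hnV, hb.zero_left, Real.sqrt_zero]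
  have hnV_nonneg : ∀ v, 0 ≤ nV v := fun v => (hnV v).symm ▸ Real.sqrt_nonneg _
  exact error_estimate hP horth hΔt hθp.le hθpθ hnV0 hnV_nonneg (hb.sqrt_add_sq_le hnV) hpoincare
    hcoer hA hB hr hu huhVh huh0 huh hη hD

/-- Convergence of the fully discrete ensemble scheme (Theorem 3.2) in abstract form:
the constant `C` depends only on `θ`, `θp`, `M` and `CP`. -/
theorem stmt7 (θ θp M CP : ℝ) (hθp : 0 < θp) (hθpθ : θp < θ) (hM : 0 ≤ M) (hCP : 0 < CP) :
    ∃ C : ℝ, 0 < C ∧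
      ∀ (V : Type) (_ : NormedAddCommGroup V), ∀ (_ : InnerProductSpace ℝ V),
      -- second inner product ⟨·,·⟩_V on V with induced norm nV = ‖·‖_V
      ∀ (ipV : V → V → ℝ),
      (∀ u v : V, ipV u v = ipV v u) →
      (∀ u v w : V, ipV (u + v) w = ipV u w + ipV v w) →
      (∀ (c : ℝ) (u v : V), ipV (c • u) v = c * ipV u v) →
      (∀ u : V, u ≠ 0 → 0 < ipV u u) →
      ∀ (nV : V → ℝ), (∀ v : V, nV v = Real.sqrt (ipV v v)) →
      -- Poincaré-type inequality
      (∀ v : V, ‖v‖ ≤ CP * nV v) →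
      -- subspace Vh and projection P
      ∀ (Vh : Submodule ℝ V) (P : V →ₗ[ℝ] V),
      (∀ v : V, P v ∈ Vh) →
      (∀ v : V, ∀ w ∈ Vh, ⟪v - P v, w⟫ = (0 : ℝ)) →
      ∀ (N : ℕ), 1 ≤ N → ∀ (Δt : ℝ), 0 < Δt →
      ∀ (A B : ℕ → V →ₗ[ℝ] V →ₗ[ℝ] ℝ) (l r : ℕ → V →ₗ[ℝ] ℝ) (R : ℕ → ℝ),
      (∀ n, 1 ≤ n → n ≤ N → ∀ v : V, θ * nV v ^ 2 ≤ A n v v) →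
      (∀ n, 1 ≤ n → n ≤ N → ∀ w v : V, |(A n w v)| ≤ M * nV w * nV v) →
      (∀ n, 1 ≤ n → n ≤ N → ∀ w v : V, |(B n w v)| ≤ θp * nV w * nV v) →
      (∀ n, 1 ≤ n → n ≤ N → 0 ≤ R n) →
      (∀ n, 1 ≤ n → n ≤ N → ∀ v : V, |(r n v)| ≤ R n * nV v) →
      ∀ (u uh : ℕ → V) (η D : ℕ → ℝ),
      -- consistency relations for the exact solution, tested against Vh
      (∀ n, n < N → ∀ v ∈ Vh,
        (1 / Δt) * ⟪u (n + 1) - u n, v⟫ + A (n + 1) (u (n + 1)) v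
          + B (n + 1) (u (n + 1)) v = l (n + 1) v - r (n + 1) v) →
      -- the discrete scheme
      (∀ n, n ≤ N → uh n ∈ Vh) →
      uh 0 = P (u 0) →
      (∀ n, n < N → ∀ v ∈ Vh,
        (1 / Δt) * ⟪uh (n + 1) - uh n, v⟫ + A (n + 1) (uh (n + 1)) v
          + B (n + 1) (uh n) v = l (n + 1) v) →
      -- approximation and increment bounds
      (∀ n, n ≤ N → nV (u n - P (u n)) ≤ η n) →
      (∀ n, n < N → nV (u (n + 1) - u n) ≤ D (n + 1)) →
      ‖u N - uh N‖ ^ 2 + θp * Δt * nV (u N - uh N) ^ 2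
          + (θ - θp) * Δt * ∑ n ∈ Finset.Icc 1 N, nV (u n - uh n) ^ 2
        ≤ C * ((1 + Δt) * η N ^ 2 + Δt * ∑ n ∈ Finset.range (N + 1), η n ^ 2
            + Δt * ∑ n ∈ Finset.Icc 1 N, (D n ^ 2 + R n ^ 2)) :=
  stmt7_general θ θp M CP hθp hθpθ
end
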